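/- Let G₁ be a simple connected graph with n₁ vertices and m₁ edges, and G₂ a simple connected graph with n₂ vertices and m₂ edges. Then the reduced second Zagreb index of the corona join product satisfies RM₂(G₁ ⊕ G₂) = RM₂(G₁) + n₁·RM₂(G₂) + n₁[n₂·M₁(G₁) + n₁·M₁(G₂)] + m₁n₁n₂(n₁n₂ − 2) + m₂n₁²(n₁ − 2) + 2n₁[2m₁m₂ + m₁n₂(n₁ − 1) + m₂n₁(n₁n₂ − 1)] + n₁²n₂[n₁²n₂ − n₁n₂ − n₁ + 1]. -/

import Mathlib

open Finset

/-- Corona join product `G₁ ⊕ G₂`: one copy of `G₁` together with one copy of `G₂` for each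
vertex of `G₁`, where every vertex of every copy of `G₂` is joined to every vertex of `G₁`. -/
def coronaJoin {V₁ V₂ : Type*} (G₁ : SimpleGraph V₁) (G₂ : SimpleGraph V₂) :
    SimpleGraph (V₁ ⊕ V₁ × V₂) where
  Adj x y :=
    match x, y with
    | Sum.inl u, Sum.inl v => G₁.Adj u v
    | Sum.inl _, Sum.inr _ => True
    | Sum.inr _, Sum.inl _ => True
    | Sum.inr (i, u), Sum.inr (j, v) => i = j ∧ G₂.Adj u v
  symm := by
    constructor
    rintro (u | ⟨i, u⟩) (v | ⟨j, v⟩) h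
    · exact h.symm
    · trivial
    · trivial
    · exact ⟨h.1.symm, h.2.symm⟩
  loopless := by
    constructor
    rintro (u | ⟨i, u⟩) h
    · exact G₁.loopless.irrefl u h
    · exact G₂.loopless.irrefl u h.2

instance coronaJoin.adjDecidable {V₁ V₂ : Type*} (G₁ : SimpleGraph V₁) (G₂ : SimpleGraph V₂)
    [DecidableEq V₁] [DecidableRel G₁.Adj] [DecidableRel G₂.Adj] :
    DecidableRel (coronaJoin G₁ G₂).Adj
  | Sum.inl u, Sum.inl v => inferInstanceAs (Decidable (G₁.Adj u v))
  | Sum.inl _, Sum.inr _ => inferInstanceAs (Decidable True)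
  | Sum.inr _, Sum.inl _ => inferInstanceAs (Decidable True)
  | Sum.inr (i, u), Sum.inr (j, v) => inferInstanceAs (Decidable (i = j ∧ G₂.Adj u v))

/-- First Zagreb index `M₁(G) = ∑ v, d(v)²`. -/
def firstZagreb {V : Type*} [Fintype V] (G : SimpleGraph V) [DecidableRel G.Adj] : ℤ :=
  ∑ v, (G.degree v : ℤ) ^ 2

/-- Forgotten topological index `F(G) = ∑ v, d(v)³`. -/
def forgottenIndex {V : Type*} [Fintype V] (G : SimpleGraph V) [DecidableRel G.Adj] : ℤ :=
  ∑ v, (G.degree v : ℤ) ^ 3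

/-- First hyper Zagreb index `HM₁(G) = ∑_{uv ∈ E(G)} (d(u) + d(v))²`. -/
def hyperZagreb {V : Type*} [Fintype V] [DecidableEq V] (G : SimpleGraph V)
    [DecidableRel G.Adj] : ℤ :=
  ∑ e ∈ G.edgeFinset,
    Sym2.lift ⟨fun u v => ((G.degree u : ℤ) + (G.degree v : ℤ)) ^ 2, fun _ _ => by ring⟩ e

/-- Reduced second Zagreb index `RM₂(G) = ∑_{uv ∈ E(G)} (d(u) - 1)(d(v) - 1)`. -/
def reducedSecondZagreb {V : Type*} [Fintype V] [DecidableEq V] (G : SimpleGraph V)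
    [DecidableRel G.Adj] : ℤ :=
  ∑ e ∈ G.edgeFinset,
    Sym2.lift ⟨fun u v => ((G.degree u : ℤ) - 1) * ((G.degree v : ℤ) - 1), fun _ _ => by ring⟩ e


/-!
In `G₁ ⊕ G₂` every vertex of `G₁` gains `n₁ n₂` neighbours and every vertex of a copy of `G₂`
gains `n₁`. Counting each edge twice, as a pair of darts, `2 RM₂(G₁ ⊕ G₂)` splits into the darts
of `G₁`, the darts of the `n₁` copies of `G₂`, and the cross darts in both directions. Shifting
all degrees of a graph by `c` turns its dart sum of `(d(u) - 1)(d(v) - 1)` into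
`2 (RM₂ + c (M₁ - 2m) + c² m)`, while the cross darts contribute a product of two degree sums.
-/

namespace SimpleGraph

variable {V : Type*} [Fintype V] (G : SimpleGraph V) [DecidableRel G.Adj]

theorem degree_eq_sum_ite (v : V) : G.degree v = ∑ w, if G.Adj v w then 1 else 0 := by
  rw [← card_neighborFinset_eq_degree, neighborFinset_eq_filter, card_filter]

theorem sum_darts_eq_sum_sum_ite {M : Type*} [AddCommMonoid M] (f : V → V → M) :
    ∑ d : G.Dart, f d.fst d.snd = ∑ v, ∑ w, if G.Adj v w then f v w else 0 := by
  let e : G.Dart ≃ {p : V × V // G.Adj p.1 p.2} :=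
    ⟨fun d => ⟨d.toProd, d.adj⟩, fun p => ⟨p.1, p.2⟩, fun _ => rfl, fun _ => rfl⟩
  rw [← Fintype.sum_prod_type', ← sum_filter,
    sum_subtype (p := fun p : V × V => G.Adj p.1 p.2) _ (fun p => by simp)]
  exact Fintype.sum_equiv e _ _ fun _ => rfl

theorem sum_darts_snd {M : Type*} [AddCommMonoid M] (g : V → M) :
    ∑ d : G.Dart, g d.snd = ∑ d : G.Dart, g d.fst :=
  Equiv.sum_comp (Dart.symm_involutive.toPerm _) fun d : G.Dart => g d.fst

theorem sum_degree_add_sub_one (c : ℤ) :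
    ∑ v, ((G.degree v : ℤ) + c - 1) = 2 * #G.edgeFinset + Fintype.card V * (c - 1) := by
  have h := congrArg (Nat.cast : ℕ → ℤ) G.sum_degrees_eq_twice_card_edges
  push_cast at h
  simp only [add_sub_assoc, sum_add_distrib, h, sum_const, card_univ, nsmul_eq_mul]

variable [DecidableEq V]

theorem sum_darts_edge {M : Type*} [AddCommMonoid M] (f : Sym2 V → M) :
    ∑ d : G.Dart, f d.edge = 2 • ∑ e ∈ G.edgeFinset, f e := by
  rw [← sum_fiberwise_of_maps_to (g := Dart.edge) (fun d _ => mem_edgeFinset.2 d.edge_mem),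
    smul_sum]
  refine sum_congr rfl fun e he => ?_
  rw [sum_congr rfl fun d hd => congrArg f (mem_filter.1 hd).2, sum_const,
    G.dart_edge_fiber_card e (mem_edgeFinset.1 he)]

theorem sum_darts_fst {M : Type*} [AddCommMonoid M] (g : V → M) :
    ∑ d : G.Dart, g d.fst = ∑ v, G.degree v • g v := by
  rw [← sum_fiberwise (g := fun d : G.Dart => d.fst)]
  refine sum_congr rfl fun v _ => ?_
  rw [sum_congr rfl fun d hd => congrArg g (mem_filter.1 hd).2, sum_const,
    dart_fst_fiber_card_eq_degree]

theorem two_mul_reducedSecondZagreb :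
    2 * reducedSecondZagreb G
      = ∑ d : G.Dart, ((G.degree d.fst : ℤ) - 1) * ((G.degree d.snd : ℤ) - 1) := by
  rw [reducedSecondZagreb, two_mul, ← two_nsmul, ← sum_darts_edge]
  rfl

theorem sum_darts_degree_sub_one :
    ∑ d : G.Dart, ((G.degree d.fst : ℤ) - 1) = firstZagreb G - 2 * #G.edgeFinset := by
  have h := congrArg (Nat.cast : ℕ → ℤ) G.sum_degrees_eq_twice_card_edges
  push_cast at h
  rw [G.sum_darts_fst (fun v => (G.degree v : ℤ) - 1), firstZagreb, ← h, ← sum_sub_distrib]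
  simp only [nsmul_eq_mul]
  exact sum_congr rfl fun v _ => by ring

theorem sum_darts_degree_add_sub_one_mul (c : ℤ) :
    ∑ d : G.Dart, ((G.degree d.fst : ℤ) + c - 1) * ((G.degree d.snd : ℤ) + c - 1)
      = 2 * (reducedSecondZagreb G + c * (firstZagreb G - 2 * #G.edgeFinset)
        + c ^ 2 * #G.edgeFinset) := by
  have expand : ∀ d : G.Dart, ((G.degree d.fst : ℤ) + c - 1) * ((G.degree d.snd : ℤ) + c - 1)
      = ((G.degree d.fst : ℤ) - 1) * ((G.degree d.snd : ℤ) - 1)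
        + c * ((G.degree d.fst : ℤ) - 1) + c * ((G.degree d.snd : ℤ) - 1) + c ^ 2 :=
    fun _ => by ring
  rw [sum_congr rfl fun d _ => expand d, sum_add_distrib, sum_add_distrib, sum_add_distrib,
    ← mul_sum, ← mul_sum, G.sum_darts_snd (fun v => (G.degree v : ℤ) - 1),
    sum_darts_degree_sub_one, ← two_mul_reducedSecondZagreb, sum_const, card_univ,
    dart_card_eq_twice_card_edges]
  ring

end SimpleGraph

theorem Fintype.sum_prod_ite_fst_eq_and {α β M : Type*} [Fintype α] [Fintype β] [DecidableEq α]
    [AddCommMonoid M] (i : α) (P : β → Prop) [DecidablePred P] (g : β → M) :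
    ∑ q : α × β, (if i = q.1 ∧ P q.2 then g q.2 else 0) = ∑ u, if P u then g u else 0 := by
  simp [Fintype.sum_prod_type, ite_and, sum_ite_irrel]

section CoronaJoin

variable {V₁ V₂ : Type*} (G₁ : SimpleGraph V₁) (G₂ : SimpleGraph V₂)

@[simp]
theorem coronaJoin_adj_inl_inl {u v : V₁} :
    (coronaJoin G₁ G₂).Adj (.inl u) (.inl v) ↔ G₁.Adj u v := Iff.rfl

@[simp]
theorem coronaJoin_adj_inl_inr {u : V₁} {p : V₁ × V₂} :
    (coronaJoin G₁ G₂).Adj (.inl u) (.inr p) := trivial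

@[simp]
theorem coronaJoin_adj_inr_inl {p : V₁ × V₂} {u : V₁} :
    (coronaJoin G₁ G₂).Adj (.inr p) (.inl u) := trivial

@[simp]
theorem coronaJoin_adj_inr_inr {p q : V₁ × V₂} :
    (coronaJoin G₁ G₂).Adj (.inr p) (.inr q) ↔ p.1 = q.1 ∧ G₂.Adj p.2 q.2 := Iff.rfl

variable [Fintype V₁] [Fintype V₂] [DecidableEq V₁] [DecidableRel G₁.Adj] [DecidableRel G₂.Adj]

theorem degree_coronaJoin_inl (v : V₁) :
    (coronaJoin G₁ G₂).degree (.inl v) = G₁.degree v + Fintype.card V₁ * Fintype.card V₂ := by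
  rw [SimpleGraph.degree_eq_sum_ite, Fintype.sum_sum_type, G₁.degree_eq_sum_ite]
  simp

theorem degree_coronaJoin_inr (p : V₁ × V₂) :
    (coronaJoin G₁ G₂).degree (.inr p) = G₂.degree p.2 + Fintype.card V₁ := by
  rw [SimpleGraph.degree_eq_sum_ite, Fintype.sum_sum_type, G₂.degree_eq_sum_ite]
  simp only [coronaJoin_adj_inr_inl, coronaJoin_adj_inr_inr, if_true, sum_const, card_univ,
    smul_eq_mul, mul_one]
  rw [add_comm, Fintype.sum_prod_ite_fst_eq_and p.1 (G₂.Adj p.2) fun _ => 1]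

variable [DecidableEq V₂]

theorem reducedSecondZagreb_coronaJoin_eq :
    reducedSecondZagreb (coronaJoin G₁ G₂)
      = reducedSecondZagreb G₁
          + Fintype.card V₁ * Fintype.card V₂ * (firstZagreb G₁ - 2 * #G₁.edgeFinset)
          + ((Fintype.card V₁ : ℤ) * Fintype.card V₂) ^ 2 * #G₁.edgeFinset
        + Fintype.card V₁ * (reducedSecondZagreb G₂
          + Fintype.card V₁ * (firstZagreb G₂ - 2 * #G₂.edgeFinset)
          + (Fintype.card V₁ : ℤ) ^ 2 * #G₂.edgeFinset)
        + Fintype.card V₁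
          * (2 * #G₁.edgeFinset + Fintype.card V₁ * ((Fintype.card V₁ * Fintype.card V₂ : ℤ) - 1))
          * (2 * #G₂.edgeFinset + Fintype.card V₂ * ((Fintype.card V₁ : ℤ) - 1)) := by
  have hdarts := (coronaJoin G₁ G₂).two_mul_reducedSecondZagreb
  rw [SimpleGraph.sum_darts_eq_sum_sum_ite (coronaJoin G₁ G₂) fun x y =>
    (((coronaJoin G₁ G₂).degree x : ℤ) - 1) * (((coronaJoin G₁ G₂).degree y : ℤ) - 1)] at hdarts
  simp only [Fintype.sum_sum_type, coronaJoin_adj_inl_inl, coronaJoin_adj_inl_inr,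
    coronaJoin_adj_inr_inl, coronaJoin_adj_inr_inr, if_true, degree_coronaJoin_inl,
    degree_coronaJoin_inr, Nat.cast_add, Nat.cast_mul, sum_add_distrib] at hdarts
  set n₁ : ℤ := (Fintype.card V₁ : ℤ) with hn₁
  set n₂ : ℤ := (Fintype.card V₂ : ℤ) with hn₂
  have hG₁ : ∑ v, ∑ w, (if G₁.Adj v w then
        ((G₁.degree v : ℤ) + n₁ * n₂ - 1) * ((G₁.degree w : ℤ) + n₁ * n₂ - 1) else 0)
      = 2 * (reducedSecondZagreb G₁ + n₁ * n₂ * (firstZagreb G₁ - 2 * #G₁.edgeFinset)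
        + (n₁ * n₂) ^ 2 * #G₁.edgeFinset) := by
    rw [← G₁.sum_darts_eq_sum_sum_ite, G₁.sum_darts_degree_add_sub_one_mul]
  have hG₂ : ∑ p : V₁ × V₂, ∑ q : V₁ × V₂, (if p.1 = q.1 ∧ G₂.Adj p.2 q.2 then
        ((G₂.degree p.2 : ℤ) + n₁ - 1) * ((G₂.degree q.2 : ℤ) + n₁ - 1) else 0)
      = n₁ * (2 * (reducedSecondZagreb G₂ + n₁ * (firstZagreb G₂ - 2 * #G₂.edgeFinset)
        + n₁ ^ 2 * #G₂.edgeFinset)) := by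
    rw [Fintype.sum_prod_type,
      sum_congr rfl fun i _ => sum_congr rfl fun u _ => Fintype.sum_prod_ite_fst_eq_and i
        (G₂.Adj u) fun w => ((G₂.degree u : ℤ) + n₁ - 1) * ((G₂.degree w : ℤ) + n₁ - 1),
      sum_const, card_univ, nsmul_eq_mul, ← hn₁, ← G₂.sum_darts_eq_sum_sum_ite,
      G₂.sum_darts_degree_add_sub_one_mul]
  have hcopies : ∑ p : V₁ × V₂, ((G₂.degree p.2 : ℤ) + n₁ - 1)
      = n₁ * (2 * #G₂.edgeFinset + n₂ * (n₁ - 1)) := by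
    simp only [Fintype.sum_prod_type, sum_const, card_univ, nsmul_eq_mul,
      G₂.sum_degree_add_sub_one, ← hn₁, ← hn₂]
  have hcross : ∑ v, ∑ p : V₁ × V₂,
        ((G₁.degree v : ℤ) + n₁ * n₂ - 1) * ((G₂.degree p.2 : ℤ) + n₁ - 1)
      = (2 * #G₁.edgeFinset + n₁ * (n₁ * n₂ - 1)) * (n₁ * (2 * #G₂.edgeFinset + n₂ * (n₁ - 1))) := by
    rw [← sum_mul_sum, hcopies, G₁.sum_degree_add_sub_one]
  have hcross' : ∑ p : V₁ × V₂, ∑ v,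
        ((G₂.degree p.2 : ℤ) + n₁ - 1) * ((G₁.degree v : ℤ) + n₁ * n₂ - 1)
      = (2 * #G₁.edgeFinset + n₁ * (n₁ * n₂ - 1)) * (n₁ * (2 * #G₂.edgeFinset + n₂ * (n₁ - 1))) := by
    rw [← sum_mul_sum, hcopies, G₁.sum_degree_add_sub_one, mul_comm]
  rw [hG₁, hG₂, hcross, hcross'] at hdarts
  refine mul_left_cancel₀ two_ne_zero ?_
  linear_combination hdarts

end CoronaJoin

theorem reducedSecondZagreb_coronaJoin_general {V₁ V₂ : Type*} [Fintype V₁] [Fintype V₂]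
    [DecidableEq V₁] [DecidableEq V₂] (G₁ : SimpleGraph V₁) (G₂ : SimpleGraph V₂)
    [DecidableRel G₁.Adj] [DecidableRel G₂.Adj]
    (n₁ n₂ m₁ m₂ : ℕ)
    (hn₁ : Fintype.card V₁ = n₁) (hn₂ : Fintype.card V₂ = n₂)
    (hm₁ : G₁.edgeFinset.card = m₁) (hm₂ : G₂.edgeFinset.card = m₂) :
    reducedSecondZagreb (coronaJoin G₁ G₂)
      = reducedSecondZagreb G₁ + n₁ * reducedSecondZagreb G₂
        + n₁ * (n₂ * firstZagreb G₁ + n₁ * firstZagreb G₂)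
        + m₁ * n₁ * n₂ * ((n₁ : ℤ) * n₂ - 2) + m₂ * (n₁ : ℤ) ^ 2 * ((n₁ : ℤ) - 2)
        + 2 * n₁ * (2 * m₁ * m₂ + m₁ * n₂ * ((n₁ : ℤ) - 1) + m₂ * n₁ * ((n₁ : ℤ) * n₂ - 1))
        + (n₁ : ℤ) ^ 2 * n₂ * ((n₁ : ℤ) ^ 2 * n₂ - (n₁ : ℤ) * n₂ - n₁ + 1) := by
  subst hn₁ hn₂ hm₁ hm₂
  rw [reducedSecondZagreb_coronaJoin_eq]
  ring

theorem reducedSecondZagreb_coronaJoin {V₁ V₂ : Type*} [Fintype V₁] [Fintype V₂]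
    [DecidableEq V₁] [DecidableEq V₂] (G₁ : SimpleGraph V₁) (G₂ : SimpleGraph V₂)
    [DecidableRel G₁.Adj] [DecidableRel G₂.Adj]
    (hG₁ : G₁.Connected) (hG₂ : G₂.Connected)
    (n₁ n₂ m₁ m₂ : ℕ)
    (hn₁ : Fintype.card V₁ = n₁) (hn₂ : Fintype.card V₂ = n₂)
    (hm₁ : G₁.edgeFinset.card = m₁) (hm₂ : G₂.edgeFinset.card = m₂) :
    reducedSecondZagreb (coronaJoin G₁ G₂)
      = reducedSecondZagreb G₁ + n₁ * reducedSecondZagreb G₂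
        + n₁ * (n₂ * firstZagreb G₁ + n₁ * firstZagreb G₂)
        + m₁ * n₁ * n₂ * ((n₁ : ℤ) * n₂ - 2) + m₂ * (n₁ : ℤ) ^ 2 * ((n₁ : ℤ) - 2)
        + 2 * n₁ * (2 * m₁ * m₂ + m₁ * n₂ * ((n₁ : ℤ) - 1) + m₂ * n₁ * ((n₁ : ℤ) * n₂ - 1))
        + (n₁ : ℤ) ^ 2 * n₂ * ((n₁ : ℤ) ^ 2 * n₂ - (n₁ : ℤ) * n₂ - n₁ + 1) :=
  reducedSecondZagreb_coronaJoin_general G₁ G₂ n₁ n₂ m₁ m₂ hn₁ hn₂ hm₁ hm₂
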